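/- arXiv:1611.01996 — 8 statements merged into one kernel-verified Lean document; each statement's English description precedes it below -/
import Mathlib

section
/- Let E be a complete real inner product space and let f : E → ℝ be a continuously differentiable function that is bounded below and satisfies a global Łojasiewicz inequality. Then f is flow-closed: for every differentiable curve x : [0,∞) → E satisfying x'(t) = −∇f(x(t)) for all t ≥ 0, the limit lim_{t→∞} x(t) exists in E; in particular the trajectory {x(t) : t ≥ 0} is contained in a compact subset of E. -/
open Set Filter Topology

/-!
Along a trajectory, `f ∘ x` has derivative `-‖∇f (x t)‖²`, so it decreases to a limit `c` in the
closure of the range of `f`. If the trajectory reaches the level `c` it is stationary from then on.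
Otherwise the Łojasiewicz inequality at `c` says exactly that
`φ = (f ∘ x - c) ^ (1 - α) / ((1 - α) k)` satisfies `‖x'‖ = ‖∇f (x)‖ ≤ -φ'`, so the length of the
trajectory after time `s` is at most `φ s → 0`: the trajectory is Cauchy, hence converges, and
together with its limit it is compact.
-/

theorem AntitoneOn.exists_tendsto_atTop_of_bddBelow {α β : Type*} [LinearOrder α]
    [ConditionallyCompleteLinearOrder β] [TopologicalSpace β] [OrderTopology β]
    {F : α → β} {a : α} (hF : AntitoneOn F (Ici a)) (hb : BddBelow (F '' Ici a)) :
    ∃ c, Tendsto F atTop (𝓝 c) ∧ ∀ t, a ≤ t → c ≤ F t := by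
  set G : α → β := fun t => F (max t a)
  have hG : Antitone G := fun s t hst =>
    hF (le_max_right s a) (le_max_right t a) (max_le_max hst le_rfl)
  have hGF : ∀ t, a ≤ t → G t = F t := fun t ht => congrArg F (max_eq_left ht)
  have hGb : BddBelow (range G) :=
    hb.mono (range_subset_iff.2 fun t => mem_image_of_mem F (le_max_right t a))
  have hlim := tendsto_atTop_ciInf hG hGb
  refine ⟨_, hlim.congr' ?_, fun t ht => hGF t ht ▸ hG.le_of_tendsto hlim t⟩
  filter_upwards [eventually_ge_atTop a] using hGF

theorem exists_tendsto_of_dist_le {β X : Type*} [Nonempty β] [SemilatticeSup β]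
    [PseudoMetricSpace X] [CompleteSpace X] {x : β → X} {φ : β → ℝ}
    (hφ : Tendsto φ atTop (𝓝 0)) (h : ∀ᶠ s in atTop, ∀ t, s ≤ t → dist (x t) (x s) ≤ φ s) :
    ∃ L, Tendsto x atTop (𝓝 L) :=
  cauchySeq_tendsto_of_complete <| Metric.cauchySeq_iff'.2 fun _ hδ =>
    (h.and (hφ.eventually (gt_mem_nhds hδ))).exists.imp fun _ hN t ht =>
      (hN.1 t ht).trans_lt hN.2

theorem Filter.Tendsto.isCompact_insert_image_Ici {X : Type*} [TopologicalSpace X] {x : ℝ → X}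
    {a : ℝ} {L : X} (hL : Tendsto x atTop (𝓝 L)) (hx : ContinuousOn x (Ici a)) :
    IsCompact (insert L (x '' Ici a)) := by
  have himage : x '' Ici a = range fun t => x (a + |t|) := by
    ext y
    constructor
    · rintro ⟨t, ht : a ≤ t, rfl⟩
      exact ⟨t - a, by simp [abs_of_nonneg (sub_nonneg.2 ht)]⟩
    · rintro ⟨t, rfl⟩
      exact ⟨a + |t|, le_add_of_nonneg_right (abs_nonneg t), rfl⟩
  have habs : Tendsto (fun t : ℝ => a + |t|) (cocompact ℝ) atTop :=
    tendsto_atTop_add_const_left _ a <|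
      (tendsto_norm_cocompact_atTop (E := ℝ)).congr fun t => Real.norm_eq_abs t
  rw [himage]
  exact (hL.comp habs).isCompact_insert_range_of_cocompact <|
    hx.comp_continuous (continuous_const.add continuous_abs)
      fun t => le_add_of_nonneg_right (abs_nonneg t)

theorem norm_sub_le_sub_of_norm_deriv_le_neg_deriv {E : Type*} [NormedAddCommGroup E]
    [NormedSpace ℝ E] {x x' : ℝ → E} {φ φ' : ℝ → ℝ} {s t : ℝ} (hst : s ≤ t)
    (hx : ContinuousOn x (Icc s t)) (hx' : ∀ u ∈ Ico s t, HasDerivWithinAt x (x' u) (Ici u) u)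
    (hφ : ContinuousOn φ (Icc s t)) (hφ' : ∀ u ∈ Ico s t, HasDerivWithinAt φ (φ' u) (Ici u) u)
    (bound : ∀ u ∈ Ico s t, ‖x' u‖ ≤ -φ' u) :
    ‖x t - x s‖ ≤ φ s - φ t :=
  image_norm_le_of_norm_deriv_right_le_deriv_boundary' (hx.sub continuousOn_const)
    (fun u hu => (hx' u hu).sub_const (x s)) (by simp) (continuousOn_const.sub hφ)
    (fun u hu => (hφ' u hu).const_sub (φ s)) bound (right_mem_Icc.2 hst)

section GradientFlow

variable {E : Type*} [NormedAddCommGroup E] [InnerProductSpace ℝ E] [CompleteSpace E]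
  {f : E → ℝ} {x : ℝ → E}

theorem HasDerivWithinAt.comp_neg_gradient {s : Set ℝ} {t : ℝ}
    (hf : DifferentiableAt ℝ f (x t)) (hx : HasDerivWithinAt x (-gradient f (x t)) s t) :
    HasDerivWithinAt (fun u => f (x u)) (-‖gradient f (x t)‖ ^ 2) s t := by
  refine (hf.hasGradientAt.hasFDerivAt.comp_hasDerivWithinAt t hx).congr_deriv ?_
  simp only [InnerProductSpace.toDual_apply_apply, inner_neg_right, real_inner_self_eq_norm_sq]

variable {a : ℝ} (hf : Differentiable ℝ f)
  (hx : ∀ t, a ≤ t → HasDerivWithinAt x (-gradient f (x t)) (Ici a) t)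
include hf hx

theorem antitoneOn_comp_of_neg_gradient : AntitoneOn (fun t => f (x t)) (Ici a) := by
  have hF : ∀ t, a ≤ t → HasDerivWithinAt (fun u => f (x u)) (-‖gradient f (x t)‖ ^ 2) (Ici a) t :=
    fun t ht => (hx t ht).comp_neg_gradient (hf _)
  refine antitoneOn_of_hasDerivWithinAt_nonpos (f' := fun t => -‖gradient f (x t)‖ ^ 2)
    (convex_Ici a) (fun t ht => (hF t ht).continuousWithinAt) (fun t ht => ?_)
    (fun t _ => neg_nonpos.2 (sq_nonneg _))
  rw [interior_Ici] at ht ⊢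
  exact ((hF t ht.le).hasDerivAt (Ici_mem_nhds ht)).hasDerivWithinAt

theorem eq_of_comp_neg_gradient_eq {t₀ : ℝ} (ht₀ : a ≤ t₀)
    (hconst : ∀ u, t₀ ≤ u → f (x u) = f (x t₀)) : ∀ u, t₀ ≤ u → x u = x t₀ := by
  have hgrad : ∀ u, t₀ ≤ u → gradient f (x u) = 0 := by
    intro u hu
    have hsub : Ici t₀ ⊆ Ici a := Ici_subset_Ici.2 ht₀
    have hflow := ((hx u (ht₀.trans hu)).comp_neg_gradient (hf _)).mono hsub
    have hconst' : HasDerivWithinAt (fun u => f (x u)) 0 (Ici t₀) u :=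
      (hasDerivWithinAt_const u _ _).congr hconst (hconst u hu)
    have := (uniqueDiffOn_Ici t₀ u hu).eq_deriv _ hflow hconst'
    simpa using this
  intro u hu
  refine constant_of_has_deriv_right_zero (f := x) (a := t₀) (b := u) ?_ ?_ u (right_mem_Icc.2 hu)
  · exact fun v hv => ((hx v (ht₀.trans hv.1)).continuousWithinAt).mono
      fun w hw => ht₀.trans hw.1
  · intro v hv
    have := (hx v (ht₀.trans hv.1)).mono (Ici_subset_Ici.2 (ht₀.trans hv.1))
    rwa [hgrad v hv.1, neg_zero] at this

theorem norm_sub_le_of_lojasiewicz {c k α : ℝ} (hk : 0 < k) (hα : α < 1) {s t : ℝ}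
    (hs : a ≤ s) (hst : s ≤ t) (hpos : ∀ u ∈ Ico s t, c < f (x u))
    (hloj : ∀ u ∈ Ico s t, k * (f (x u) - c) ^ α ≤ ‖gradient f (x u)‖) :
    ‖x t - x s‖ ≤ (f (x s) - c) ^ (1 - α) / ((1 - α) * k) -
      (f (x t) - c) ^ (1 - α) / ((1 - α) * k) := by
  have hsub : Icc s t ⊆ Ici a := fun u hu => hs.trans hu.1
  have hIci : ∀ u ∈ Ico s t, Ici u ⊆ Ici a := fun u hu => Ici_subset_Ici.2 (hs.trans hu.1)
  have hxc : ContinuousOn x (Icc s t) :=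
    fun u hu => ((hx u (hsub hu)).continuousWithinAt).mono hsub
  have hP : ∀ u ∈ Ico s t, HasDerivWithinAt (fun u => f (x u) - c)
      (-‖gradient f (x u)‖ ^ 2) (Ici u) u := fun u hu =>
    (((hx u (hsub (Ico_subset_Icc_self hu))).comp_neg_gradient (hf _)).mono (hIci u hu)).sub_const c
  refine norm_sub_le_sub_of_norm_deriv_le_neg_deriv hst hxc
    (fun u hu => (hx u (hsub (Ico_subset_Icc_self hu))).mono (hIci u hu))
    (φ' := fun u => -((f (x u) - c) ^ (-α) * ‖gradient f (x u)‖ ^ 2 / k))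
    (((hf.continuous.comp_continuousOn hxc).sub continuousOn_const).rpow_const
      (fun _ _ => Or.inr (sub_pos.2 hα).le) |>.div_const _) (fun u hu => ?_) (fun u hu => ?_)
  · refine (((Real.hasDerivAt_rpow_const (Or.inl (sub_pos.2 (hpos u hu)).ne')).comp_hasDerivWithinAt
      u (hP u hu)).div_const _).congr_deriv ?_
    rw [show 1 - α - 1 = -α by ring]
    field_simp [(sub_pos.2 hα).ne']
  · rw [norm_neg, neg_neg]
    set G := ‖gradient f (x u)‖
    have hp := sub_pos.2 (hpos u hu)
    have hpα := Real.rpow_pos_of_pos hp α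
    have hG : 0 ≤ G := norm_nonneg _
    rw [Real.rpow_neg hp.le, le_div_iff₀ hk]
    calc G * k = ((f (x u) - c) ^ α)⁻¹ * (G * (k * (f (x u) - c) ^ α)) := by field_simp
      _ ≤ ((f (x u) - c) ^ α)⁻¹ * (G * G) := by gcongr; exact hloj u hu
      _ = ((f (x u) - c) ^ α)⁻¹ * G ^ 2 := by ring

theorem exists_tendsto_of_lojasiewicz {c ε k α : ℝ}
    (hc : Tendsto (fun t => f (x t)) atTop (𝓝 c)) (hgt : ∀ t, a ≤ t → c < f (x t))
    (hε : 0 < ε) (hk : 0 < k) (hα : α < 1)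
    (hloj : ∀ y, |f y - c| < ε → k * |f y - c| ^ α ≤ ‖gradient f y‖) :
    ∃ L, Tendsto x atTop (𝓝 L) := by
  have hα' : 0 < 1 - α := sub_pos.2 hα
  set φ : ℝ → ℝ := fun s => (f (x s) - c) ^ (1 - α) / ((1 - α) * k)
  have hφ : Tendsto φ atTop (𝓝 0) := by
    have := ((Real.continuousAt_rpow_const 0 (1 - α) (Or.inr hα'.le)).tendsto.comp
      (tendsto_sub_nhds_zero_iff.2 hc)).div_const ((1 - α) * k)
    simpa [Real.zero_rpow hα'.ne'] using this
  obtain ⟨T, hT⟩ := eventually_atTop.1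
    ((eventually_ge_atTop a).and (Metric.tendsto_nhds.1 hc ε hε))
  refine exists_tendsto_of_dist_le hφ ?_
  filter_upwards [eventually_ge_atTop T] with s hs t hst
  have hpos : ∀ u, s ≤ u → 0 < f (x u) - c := fun u hu =>
    sub_pos.2 (hgt u (hT u (hs.trans hu)).1)
  have hlen := norm_sub_le_of_lojasiewicz hf hx hk hα (hT s hs).1 hst
    (fun u hu => sub_pos.1 (hpos u hu.1)) fun u hu => by
      simpa only [abs_of_pos (hpos u hu.1)] using hloj _ (hT u (hs.trans hu.1)).2
  rw [dist_eq_norm]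
  exact hlen.trans <|
    sub_le_self _ (div_nonneg (Real.rpow_nonneg (hpos t hst).le _) (by positivity))

end GradientFlow

/-- **Flow-closedness from a global Łojasiewicz inequality.**
Let `E` be a complete real inner product space and `f : E → ℝ` a continuously
differentiable function that is bounded below and satisfies a global Łojasiewicz
inequality (for every `f_c` in the closure of the range of `f` there are `ε > 0`,
`k > 0` and `0 < α < 1` with `‖∇f x‖ ≥ k * |f x - f_c| ^ α` whenever
`|f x - f_c| < ε`).  Then every trajectory of the negative gradient flow defined on
`[0, ∞)` converges as `t → ∞`; in particular it is contained in a compact subset. -/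
theorem stmt_0
    {E : Type*} [NormedAddCommGroup E] [InnerProductSpace ℝ E] [CompleteSpace E]
    (f : E → ℝ) (hf : ContDiff ℝ 1 f)
    (hbdd : BddBelow (Set.range f))
    (hLoj : ∀ fc ∈ closure (Set.range f), ∃ ε > (0 : ℝ), ∃ k > (0 : ℝ), ∃ a : ℝ,
      0 < a ∧ a < 1 ∧
        ∀ x : E, |f x - fc| < ε → k * |f x - fc| ^ a ≤ ‖gradient f x‖)
    (x : ℝ → E)
    (hx : ∀ t : ℝ, 0 ≤ t → HasDerivWithinAt x (-(gradient f (x t))) (Set.Ici 0) t) :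
    (∃ L : E, Filter.Tendsto x Filter.atTop (nhds L)) ∧
      ∃ K : Set E, IsCompact K ∧ ∀ t : ℝ, 0 ≤ t → x t ∈ K := by
  have hf1 : Differentiable ℝ f := hf.differentiable one_ne_zero
  have hanti := antitoneOn_comp_of_neg_gradient hf1 hx
  obtain ⟨c, hc, hcle⟩ := hanti.exists_tendsto_atTop_of_bddBelow <|
    hbdd.mono (by rintro _ ⟨t, -, rfl⟩; exact mem_range_self (x t))
  obtain ⟨ε, hε, k, hk, α, -, hα, hloj⟩ :=
    hLoj c (mem_closure_of_tendsto hc (.of_forall fun t => mem_range_self (x t)))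
  obtain ⟨L, hL⟩ : ∃ L, Tendsto x atTop (𝓝 L) := by
    by_cases hhit : ∃ t₀, 0 ≤ t₀ ∧ f (x t₀) = c
    · obtain ⟨t₀, ht₀, hfc⟩ := hhit
      have hstat := eq_of_comp_neg_gradient_eq hf1 hx ht₀ fun u hu =>
        le_antisymm (hanti ht₀ (ht₀.trans hu) hu) (hfc ▸ hcle u (ht₀.trans hu))
      exact ⟨x t₀, tendsto_const_nhds.congr' <|
        eventually_atTop.2 ⟨t₀, fun u hu => (hstat u hu).symm⟩⟩
    · push Not at hhit
      exact exists_tendsto_of_lojasiewicz hf1 hx hc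
        (fun t ht => (hcle t ht).lt_of_ne (hhit t ht).symm) hε hk hα hloj
  exact ⟨⟨L, hL⟩, _, hL.isCompact_insert_image_Ici fun t ht => (hx t ht).continuousWithinAt,
    fun t ht => mem_insert_of_mem _ (mem_image_of_mem x ht)⟩
end

section
/- Let V₁ and V₂ be finite-dimensional real inner product spaces, A : V₁ → V₂ a linear map, α ∈ V₂, and let φ : V₁ → V₂ be the affine map φ(v) = A v − α. Then for every φ_c in the image of φ there exist constants c > 0 and ε > 0 such that ‖v‖·‖φ(v)‖² ≥ c·| ‖φ(v)‖² − ‖φ_c‖² |^{3/2} for all v ∈ V₁ with ‖φ(v) − φ_c‖ < ε. -/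
/-! Put `u = φ v - φ v_c`. Near `u = 0` the translates `φ v_c + u = φ v` and `A v_c + u = A v` have
norm at least `‖u‖`: for a nonzero translate by continuity, and trivially for the zero one. The first
bound keeps `‖φ v_c‖` within `2 ‖φ v‖`, so that `|‖φ v‖² - ‖φ v_c‖²|` is `O(‖u‖ ‖φ v‖)` and `O(‖φ v‖²)`,
whence its `3/2`-th power is `O(‖u‖ ‖φ v‖²)`; the second gives `‖u‖ ≤ ‖A v‖ = O(‖v‖)`. -/

open Topology

theorem eventually_norm_le_norm_add {E : Type*} [NormedAddCommGroup E] (w : E) :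
    ∀ᶠ u in 𝓝 0, ‖u‖ ≤ ‖w + u‖ := by
  rcases eq_or_ne w 0 with rfl | hw
  · simp
  · have hlt : ∀ᶠ u in 𝓝 (0 : E), ‖u‖ < ‖w + u‖ :=
      continuous_norm.continuousAt.eventually_lt (by fun_prop) (by simpa using hw)
    exact hlt.mono fun _ => le_of_lt

theorem abs_sq_sub_sq_rpow_le {s b r : ℝ} (hrs : |s - b| ≤ r) (hr : r ≤ s) :
    |s ^ 2 - b ^ 2| ^ (3 / 2 : ℝ) ≤ 3 * √3 * r * s ^ 2 := by
  have hs : 0 ≤ s := (abs_nonneg _).trans (hrs.trans hr)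
  have hb := abs_le.1 (hrs.trans hr)
  have hD : |s ^ 2 - b ^ 2| ≤ r * (3 * s) :=
    calc |s ^ 2 - b ^ 2| = |s - b| * |s + b| := by rw [← abs_mul]; ring_nf
      _ ≤ r * (3 * s) :=
        mul_le_mul hrs (abs_le.2 ⟨by linarith, by linarith⟩) (abs_nonneg _) ((abs_nonneg _).trans hrs)
  have hD' : |s ^ 2 - b ^ 2| ≤ 3 * s ^ 2 := hD.trans (by nlinarith)
  calc |s ^ 2 - b ^ 2| ^ (3 / 2 : ℝ) = √|s ^ 2 - b ^ 2| * |s ^ 2 - b ^ 2| := by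
        rw [show (3 / 2 : ℝ) = 1 / 2 + 1 by norm_num, Real.rpow_add' (abs_nonneg _) (by norm_num),
          Real.rpow_one, Real.sqrt_eq_rpow]
    _ ≤ (√3 * s) * (r * (3 * s)) := by
        gcongr
        calc √|s ^ 2 - b ^ 2| ≤ √(3 * s ^ 2) := Real.sqrt_le_sqrt hD'
          _ = √3 * s := by rw [Real.sqrt_mul (by norm_num), Real.sqrt_sq hs]
    _ = 3 * √3 * r * s ^ 2 := by ring

theorem stmt_5_general
    {V₁ V₂ : Type*}
    [NormedAddCommGroup V₁] [InnerProductSpace ℝ V₁] [FiniteDimensional ℝ V₁]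
    [NormedAddCommGroup V₂] [InnerProductSpace ℝ V₂]
    (A : V₁ →ₗ[ℝ] V₂) (α : V₂) (φ : V₁ → V₂) (hφ : ∀ v, φ v = A v - α)
    (vc : V₁) :
    ∃ c > (0 : ℝ), ∃ ε > (0 : ℝ), ∀ v : V₁, ‖φ v - φ vc‖ < ε →
      c * |‖φ v‖ ^ 2 - ‖φ vc‖ ^ 2| ^ (3 / 2 : ℝ) ≤ ‖v‖ * ‖φ v‖ ^ 2 := by
  obtain ⟨C, hC, hAC⟩ := (LinearMap.toContinuousLinearMap A).bound
  obtain ⟨ε, hε, hsmall⟩ := Metric.eventually_nhds_iff.1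
    ((eventually_norm_le_norm_add (φ vc)).and (eventually_norm_le_norm_add (A vc)))
  refine ⟨(3 * √3 * C)⁻¹, by positivity, ε, hε, fun v hv => ?_⟩
  obtain ⟨hφv, hAv⟩ := hsmall (y := φ v - φ vc) (by rwa [dist_zero_right])
  rw [add_sub_cancel] at hφv
  rw [show A vc + (φ v - φ vc) = A v by simp only [hφ]; abel] at hAv
  calc (3 * √3 * C)⁻¹ * |‖φ v‖ ^ 2 - ‖φ vc‖ ^ 2| ^ (3 / 2 : ℝ)
      ≤ (3 * √3 * C)⁻¹ * (3 * √3 * ‖φ v - φ vc‖ * ‖φ v‖ ^ 2) := by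
        gcongr
        exact abs_sq_sub_sq_rpow_le (abs_norm_sub_norm_le _ _) hφv
    _ ≤ (3 * √3 * C)⁻¹ * (3 * √3 * (C * ‖v‖) * ‖φ v‖ ^ 2) := by
        gcongr
        exact hAv.trans (hAC v)
    _ = ‖v‖ * ‖φ v‖ ^ 2 := by field_simp

/-- **Affine quadratic estimate.**  Let `V₁, V₂` be finite-dimensional real inner
product spaces, `A : V₁ → V₂` linear, `α ∈ V₂` and `φ v = A v - α`.  For every
`φ_c = φ v_c` in the image of `φ` there exist `c > 0` and `ε > 0` such that
`‖v‖ ⬝ ‖φ v‖² ≥ c ⬝ |‖φ v‖² - ‖φ_c‖²| ^ (3/2)` whenever `‖φ v - φ_c‖ < ε`. -/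
theorem stmt_5
    {V₁ V₂ : Type*}
    [NormedAddCommGroup V₁] [InnerProductSpace ℝ V₁] [FiniteDimensional ℝ V₁]
    [NormedAddCommGroup V₂] [InnerProductSpace ℝ V₂] [FiniteDimensional ℝ V₂]
    (A : V₁ →ₗ[ℝ] V₂) (α : V₂) (φ : V₁ → V₂) (hφ : ∀ v, φ v = A v - α)
    (vc : V₁) :
    ∃ c > (0 : ℝ), ∃ ε > (0 : ℝ), ∀ v : V₁, ‖φ v - φ vc‖ < ε →
      c * |‖φ v‖ ^ 2 - ‖φ vc‖ ^ 2| ^ (3 / 2 : ℝ) ≤ ‖v‖ * ‖φ v‖ ^ 2 :=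
  stmt_5_general A α φ hφ vc
end

section
/- Let N ≥ 1, let E be a finite-dimensional real inner product space, let A : M_N(ℂ) → E be an ℝ-linear map on the space of N×N complex matrices, and let α ∈ E. Define μ : ℂᴺ → E by μ(x) = A(x x*) − α, where x x* denotes the N×N matrix with entries x_i·conj(x_j), and set f = ‖μ‖². Then for every μ_c ∈ E there exist constants c > 0 and ε > 0 such that ‖x‖²·f(x) ≥ c·|f(x) − f_c|^{3/2} for all x ∈ ℂᴺ with ‖μ(x) − μ_c‖ < ε, where f_c = ‖μ_c‖². -/
/-!
Write `y = μ x`, `t = ‖y‖`, `s = ‖μ_c‖` and `D = ‖y - μ_c‖`. Near `μ_c` we have `s ≤ 2t`, so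
`|t² - s²| = |t - s| (t + s) ≤ 3tD` and `D ≤ 3t`, whence `|f - f_c|^{3/2} ≤ 9t²D`. It remains to
bound `D` by a multiple of `‖x‖²`. Since `μ x + α = A (x x*)` is quadratic in `x`, we have
`‖μ x + α‖ ≤ C‖x‖²`, and near `μ_c` also `D ≤ ‖μ x + α‖`: if `μ_c + α ≠ 0` because `D → 0` while
`‖μ x + α‖ → ‖μ_c + α‖ > 0`, and trivially otherwise.
-/

open Filter Topology

section Estimates

variable {E : Type*} [SeminormedAddCommGroup E]

lemma rpow_three_halves_le_of_le_mul {a t D : ℝ} (ha : 0 ≤ a) (ht : 0 ≤ t)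
    (haD : a ≤ 3 * t * D) (hDt : D ≤ 3 * t) :
    a ^ (3 / 2 : ℝ) ≤ 9 * t ^ 2 * D := by
  set r := √a with hr
  have hr0 : 0 ≤ r := Real.sqrt_nonneg a
  have hrsq : r ^ 2 = a := Real.sq_sqrt ha
  have hpow : a ^ (3 / 2 : ℝ) = r ^ 3 := by
    rw [hr, Real.sqrt_eq_rpow, ← Real.rpow_natCast, ← Real.rpow_mul ha]
    norm_num
  have hrt : r ≤ 3 * t := by nlinarith
  rw [hpow]
  calc r ^ 3 = r * r ^ 2 := by ring
    _ ≤ 3 * t * (3 * t * D) := mul_le_mul hrt (hrsq ▸ haD) (sq_nonneg r) (by positivity)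
    _ = 9 * t ^ 2 * D := by ring

lemma abs_sq_norm_sub_sq_norm_rpow_le {y z : E} (h : ‖z‖ ≤ 2 * ‖y‖) :
    |‖y‖ ^ 2 - ‖z‖ ^ 2| ^ (3 / 2 : ℝ) ≤ 9 * ‖y‖ ^ 2 * ‖y - z‖ := by
  have hsum : ‖y‖ + ‖z‖ ≤ 3 * ‖y‖ := by linarith
  have hdiff : |‖y‖ ^ 2 - ‖z‖ ^ 2| ≤ 3 * ‖y‖ * ‖y - z‖ :=
    calc |‖y‖ ^ 2 - ‖z‖ ^ 2| = |‖y‖ - ‖z‖| * (‖y‖ + ‖z‖) := by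
          rw [show ‖y‖ ^ 2 - ‖z‖ ^ 2 = (‖y‖ - ‖z‖) * (‖y‖ + ‖z‖) by ring, abs_mul,
            abs_of_nonneg (by positivity : 0 ≤ ‖y‖ + ‖z‖)]
      _ ≤ ‖y - z‖ * (3 * ‖y‖) :=
          mul_le_mul (abs_norm_sub_norm_le y z) hsum (by positivity) (norm_nonneg _)
      _ = 3 * ‖y‖ * ‖y - z‖ := by ring
  exact rpow_three_halves_le_of_le_mul (abs_nonneg _) (norm_nonneg _) hdiff
    ((norm_sub_le y z).trans hsum)

lemma eventually_norm_le_two_mul_norm (z : E) : ∀ᶠ y in 𝓝 z, ‖z‖ ≤ 2 * ‖y‖ := by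
  rcases eq_or_ne ‖z‖ 0 with hz | hz
  · exact Eventually.of_forall fun y => by rw [hz]; positivity
  · have hlt : ‖z‖ / 2 < ‖z‖ := half_lt_self ((norm_nonneg z).lt_of_ne' hz)
    filter_upwards [(continuous_norm.tendsto z).eventually (lt_mem_nhds hlt)] with y hy
    linarith

lemma eventually_norm_sub_le_norm_add (z α : E) : ∀ᶠ y in 𝓝 z, ‖y - z‖ ≤ ‖y + α‖ := by
  rcases eq_or_ne ‖z + α‖ 0 with hz | hz
  · refine Eventually.of_forall fun y => ?_
    calc ‖y - z‖ = ‖(y + α) - (z + α)‖ := by rw [add_sub_add_right_eq_sub]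
      _ ≤ ‖y + α‖ + ‖z + α‖ := norm_sub_le _ _
      _ = ‖y + α‖ := by rw [hz, add_zero]
  · have hpos : (0 : ℝ) < ‖z + α‖ - ‖z - z‖ := by
      rw [sub_self, norm_zero, sub_zero]; exact (norm_nonneg _).lt_of_ne' hz
    have hcont : Continuous fun y : E => ‖y + α‖ - ‖y - z‖ := by fun_prop
    filter_upwards [hcont.continuousAt.eventually (lt_mem_nhds hpos)] with y hy
    linarith

end Estimates

section OuterProduct

attribute [local instance] Matrix.normedAddCommGroup Matrix.normedSpace

variable {n : Type*} [Fintype n]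

lemma norm_outerProduct_le (x : EuclideanSpace ℂ n) :
    ‖(Matrix.of fun i j => x i * (starRingEnd ℂ) (x j) : Matrix n n ℂ)‖ ≤ ‖x‖ ^ 2 := by
  rw [Matrix.norm_le_iff (sq_nonneg _)]
  intro i j
  rw [Matrix.of_apply, norm_mul, RCLike.norm_conj, sq]
  exact mul_le_mul (PiLp.norm_apply_le x i) (PiLp.norm_apply_le x j) (norm_nonneg _)
    (norm_nonneg _)

lemma exists_pos_bound_apply_outerProduct {F : Type*} [NormedAddCommGroup F] [NormedSpace ℝ F]
    (A : Matrix n n ℂ →ₗ[ℝ] F) :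
    ∃ C > 0, ∀ x : EuclideanSpace ℂ n,
      ‖A (Matrix.of fun i j => x i * (starRingEnd ℂ) (x j))‖ ≤ C * ‖x‖ ^ 2 := by
  obtain ⟨C, hC, hA⟩ := (LinearMap.toContinuousLinearMap A).bound
  exact ⟨C, hC, fun x => (hA _).trans (mul_le_mul_of_nonneg_left (norm_outerProduct_le x) hC.le)⟩

end OuterProduct

theorem stmt_6_general
    {E : Type*} [NormedAddCommGroup E] [InnerProductSpace ℝ E]
    (N : ℕ)
    (A : Matrix (Fin N) (Fin N) ℂ →ₗ[ℝ] E) (α : E)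
    (μ : EuclideanSpace ℂ (Fin N) → E)
    (hμ : ∀ x : EuclideanSpace ℂ (Fin N),
      μ x = A (Matrix.of fun i j => x i * (starRingEnd ℂ) (x j)) - α)
    (f : EuclideanSpace ℂ (Fin N) → ℝ) (hf : ∀ x, f x = ‖μ x‖ ^ 2)
    (μc : E) :
    ∃ c > (0 : ℝ), ∃ ε > (0 : ℝ), ∀ x : EuclideanSpace ℂ (Fin N),
      ‖μ x - μc‖ < ε →
        c * |f x - ‖μc‖ ^ 2| ^ (3 / 2 : ℝ) ≤ ‖x‖ ^ 2 * f x := by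
  obtain ⟨C, hC, hA⟩ := exists_pos_bound_apply_outerProduct A
  obtain ⟨ε, hε, hnear⟩ := Metric.eventually_nhds_iff.1
    ((eventually_norm_le_two_mul_norm μc).and (eventually_norm_sub_le_norm_add μc α))
  refine ⟨1 / (9 * C), by positivity, ε, hε, fun x hx => ?_⟩
  obtain ⟨hμc, hdist⟩ := hnear (y := μ x) (by rwa [dist_eq_norm])
  have hquad : ‖μ x - μc‖ ≤ C * ‖x‖ ^ 2 := hdist.trans (by rw [hμ, sub_add_cancel]; exact hA x)
  rw [hf]
  calc 1 / (9 * C) * |‖μ x‖ ^ 2 - ‖μc‖ ^ 2| ^ (3 / 2 : ℝ)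
      ≤ 1 / (9 * C) * (9 * ‖μ x‖ ^ 2 * ‖μ x - μc‖) := by
        gcongr; exact abs_sq_norm_sub_sq_norm_rpow_le hμc
    _ ≤ 1 / (9 * C) * (9 * ‖μ x‖ ^ 2 * (C * ‖x‖ ^ 2)) := by gcongr
    _ = ‖x‖ ^ 2 * ‖μ x‖ ^ 2 := by field_simp

/-- **Key quadratic estimate for moment maps of linear actions.**  Let
`μ : ℂᴺ → E`, `μ x = A (x x*) - α` for an `ℝ`-linear map `A` on `N × N` complex
matrices (where `(x x*) i j = x i * conj (x j)`), and `f = ‖μ‖²`.  For every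
`μ_c ∈ E` there exist `c > 0` and `ε > 0` such that
`‖x‖² ⬝ f x ≥ c ⬝ |f x - f_c| ^ (3/2)` (with `f_c = ‖μ_c‖²`) whenever
`‖μ x - μ_c‖ < ε`. -/
theorem stmt_6
    {E : Type*} [NormedAddCommGroup E] [InnerProductSpace ℝ E] [FiniteDimensional ℝ E]
    (N : ℕ) (hN : 1 ≤ N)
    (A : Matrix (Fin N) (Fin N) ℂ →ₗ[ℝ] E) (α : E)
    (μ : EuclideanSpace ℂ (Fin N) → E)
    (hμ : ∀ x : EuclideanSpace ℂ (Fin N),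
      μ x = A (Matrix.of fun i j => x i * (starRingEnd ℂ) (x j)) - α)
    (f : EuclideanSpace ℂ (Fin N) → ℝ) (hf : ∀ x, f x = ‖μ x‖ ^ 2)
    (μc : E) :
    ∃ c > (0 : ℝ), ∃ ε > (0 : ℝ), ∀ x : EuclideanSpace ℂ (Fin N),
      ‖μ x - μc‖ < ε →
        c * |f x - ‖μc‖ ^ 2| ^ (3 / 2 : ℝ) ≤ ‖x‖ ^ 2 * f x :=
  stmt_6_general N A α μ hμ f hf μc
end

section
/- Let V be a finite-dimensional complex inner product space and let 𝔤 be a finite-dimensional real inner product space realized as a real subspace of the ℂ-linear endomorphisms of V, all of whose elements are skew-adjoint and pairwise commute. Fix a unit vector ŷ ∈ V, let stab(ŷ) = {ξ ∈ 𝔤 : ξ ŷ = 0}, let P : 𝔤 → 𝔤 be the orthogonal projection onto the orthogonal complement of stab(ŷ) in 𝔤, and let Q = id − P. Then there exist an open neighborhood U of ŷ in the unit sphere of V and constants c, c', c'' > 0, depending only on ŷ and U, such that for every ξ ∈ 𝔤 and every x ∈ V \ {0} with x/‖x‖ ∈ U: (i) ‖ξ x‖ ≥ c·‖x‖·‖Pξ‖;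 (ii) ‖ξ x‖ ≥ c'·‖(Pξ) x‖; (iii) ‖ξ x‖ ≥ c''·(‖(Pξ) x‖ + ‖(Qξ) x‖). -/
/-!
Write `w = ξ ŷ`. Since `ξ - P ξ` stabilizes `ŷ`, also `w = (P ξ) ŷ`, and `ξ ↦ ξ ŷ` is injective on
`stab(ŷ)ᗮ`, so `‖w‖ ≥ c ‖P ξ‖`. For `z` near `ŷ`, skewness gives
`re ⟪ξ z, w⟫ = ‖w‖² - re ⟪z - ŷ, ξ w⟫`, and commutativity turns `ξ w` into `(P ξ) w`, whose norm is
`O(‖P ξ‖ ‖w‖) = O(‖w‖²)` however large `ξ` is. Hence `‖ξ z‖ ≥ ‖w‖ / 2 ≥ c ‖P ξ‖ / 2`, which is (i)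
after rescaling `x`; (ii) and (iii) follow from `‖(P ξ) x‖ ≤ C ‖P ξ‖ ‖x‖` and the triangle
inequality.
-/

open Metric

theorem exists_norm_apply_apply_le {E F : Type*} [NormedAddCommGroup E] [NormedSpace ℝ E]
    [FiniteDimensional ℝ E] [NormedAddCommGroup F] [NormedSpace ℂ F] [FiniteDimensional ℂ F]
    (ρ : E →ₗ[ℝ] F →ₗ[ℂ] F) : ∃ C > 0, ∀ ξ v, ‖ρ ξ v‖ ≤ C * ‖ξ‖ * ‖v‖ := by
  let L : E →L[ℝ] F →L[ℝ] F := LinearMap.toContinuousLinearMap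
    (LinearMap.toContinuousLinearMap.toLinearMap ∘ₗ LinearMap.restrictScalarsₗ ℝ ℂ F F ℝ ∘ₗ ρ)
  exact L.isBoundedBilinearMap.bound

theorem LinearMap.exists_mul_norm_le_norm_of_mem_orthogonal_ker {𝕜 E F : Type*} [RCLike 𝕜]
    [NormedAddCommGroup E] [InnerProductSpace 𝕜 E] [FiniteDimensional 𝕜 E]
    [NormedAddCommGroup F] [NormedSpace 𝕜 F] (T : E →ₗ[𝕜] F) :
    ∃ c > 0, ∀ η ∈ (ker T)ᗮ, c * ‖η‖ ≤ ‖T η‖ := by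
  have hinj : ker (T.domRestrict (ker T)ᗮ) = ⊥ := by
    rw [ker_eq_bot, injective_domRestrict_iff]
    exact (ker T).orthogonal_disjoint.symm
  obtain ⟨K, hK, hT⟩ := (T.domRestrict (ker T)ᗮ).exists_antilipschitzWith hinj
  refine ⟨(K : ℝ)⁻¹, by positivity, fun η hη => ?_⟩
  rw [inv_mul_le_iff₀ (by exact_mod_cast hK)]
  exact hT.le_mul_norm (map_zero _) ⟨η, hη⟩

open RCLike in
theorem norm_apply_le_two_mul_norm_apply_of_skew {𝕜 V : Type*} [RCLike 𝕜]
    [NormedAddCommGroup V] [InnerProductSpace 𝕜 V] (A : V →ₗ[𝕜] V)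
    (hA : ∀ u v, (inner 𝕜 (A u) v : 𝕜) = -inner 𝕜 u (A v)) {y z : V}
    (hz : ‖z - y‖ * ‖A (A y)‖ ≤ ‖A y‖ ^ 2 / 2) : ‖A y‖ ≤ 2 * ‖A z‖ := by
  have hsplit : re (inner 𝕜 (A z) (A y)) = ‖A y‖ ^ 2 - re (inner 𝕜 (z - y) (A (A y))) := by
    rw [← sub_add_cancel z y, map_add, inner_add_left, hA, map_add, inner_self_eq_norm_sq,
      add_sub_cancel_right, map_neg, ← sub_eq_neg_add]
  have hsq : ‖A y‖ * ‖A y‖ ≤ 2 * ‖A z‖ * ‖A y‖ := by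
    nlinarith [re_inner_le_norm (𝕜 := 𝕜) (z - y) (A (A y)),
      re_inner_le_norm (𝕜 := 𝕜) (A z) (A y)]
  rcases (norm_nonneg (A y)).eq_or_lt with h | h
  · rw [← h]; positivity
  · exact le_of_mul_le_mul_right hsq h

theorem mul_norm_le_two_mul_norm_apply {V g : Type*} [NormedAddCommGroup V]
    [InnerProductSpace ℂ V] [NormedAddCommGroup g] [NormedSpace ℝ g]
    (ρ : g →ₗ[ℝ] V →ₗ[ℂ] V) {ξ η : g} {y z : V} {C c : ℝ}
    (hskew : ∀ u v, (inner ℂ (ρ ξ u) v : ℂ) = -inner ℂ u (ρ ξ v))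
    (hcomm : ∀ v, ρ ξ (ρ η v) = ρ η (ρ ξ v)) (hC : ∀ v, ‖ρ η v‖ ≤ C * ‖η‖ * ‖v‖)
    (hηy : ρ η y = ρ ξ y) (hc : c * ‖η‖ ≤ ‖ρ η y‖) (hz : 2 * C * ‖z - y‖ ≤ c) :
    c * ‖η‖ ≤ 2 * ‖ρ ξ z‖ := by
  set w := ρ ξ y
  rw [hηy] at hc
  refine hc.trans (norm_apply_le_two_mul_norm_apply_of_skew (ρ ξ) hskew ?_)
  have hw : ρ ξ w = ρ η w := by rw [← hcomm, hηy]
  calc ‖z - y‖ * ‖ρ ξ w‖ ≤ ‖z - y‖ * (C * ‖η‖ * ‖w‖) := by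
        rw [hw]; exact mul_le_mul_of_nonneg_left (hC w) (norm_nonneg _)
    _ = 2 * C * ‖z - y‖ * ‖η‖ * ‖w‖ / 2 := by ring
    _ ≤ c * ‖η‖ * ‖w‖ / 2 := by gcongr
    _ ≤ ‖w‖ ^ 2 / 2 := by rw [sq]; gcongr

theorem mul_norm_mul_norm_le_norm_apply {V g : Type*} [NormedAddCommGroup V]
    [InnerProductSpace ℂ V] [NormedAddCommGroup g] [NormedSpace ℝ g]
    (ρ : g →ₗ[ℝ] V →ₗ[ℂ] V) {ξ η : g} {x y : V} {C c : ℝ}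
    (hskew : ∀ u v, (inner ℂ (ρ ξ u) v : ℂ) = -inner ℂ u (ρ ξ v))
    (hcomm : ∀ v, ρ ξ (ρ η v) = ρ η (ρ ξ v)) (hC : ∀ v, ‖ρ η v‖ ≤ C * ‖η‖ * ‖v‖)
    (hηy : ρ η y = ρ ξ y) (hc : c * ‖η‖ ≤ ‖ρ η y‖) (hx : x ≠ 0)
    (hxy : 2 * C * ‖‖x‖⁻¹ • x - y‖ ≤ c) :
    c / 2 * (‖x‖ * ‖η‖) ≤ ‖ρ ξ x‖ := by
  have h := mul_norm_le_two_mul_norm_apply ρ hskew hcomm hC hηy hc hxy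
  rw [LinearMap.map_smul_of_tower, norm_smul, norm_inv, norm_norm] at h
  have hx0 := norm_pos_iff.mpr hx
  calc c / 2 * (‖x‖ * ‖η‖) = ‖x‖ * (c * ‖η‖) / 2 := by ring
    _ ≤ ‖x‖ * (2 * (‖x‖⁻¹ * ‖ρ ξ x‖)) / 2 := by gcongr
    _ = ‖ρ ξ x‖ := by field_simp

theorem stmt_7_general
    {V : Type*} [NormedAddCommGroup V] [InnerProductSpace ℂ V] [FiniteDimensional ℂ V]
    {g : Type*} [NormedAddCommGroup g] [InnerProductSpace ℝ g] [FiniteDimensional ℝ g]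
    (ρ : g →ₗ[ℝ] (V →ₗ[ℂ] V))
    (hskew : ∀ ξ : g, ∀ u v : V, (inner ℂ (ρ ξ u) v : ℂ) = -(inner ℂ u (ρ ξ v) : ℂ))
    (hcomm : ∀ ξ η : g, ∀ v : V, ρ ξ (ρ η v) = ρ η (ρ ξ v))
    (yhat : V)
    (P : g → g)
    (hP : ∀ ξ : g, ρ (ξ - P ξ) yhat = 0 ∧
      ∀ η : g, ρ η yhat = 0 → (inner ℝ (P ξ) η : ℝ) = 0) :
    ∃ U : Set V, IsOpen U ∧ yhat ∈ U ∧
      ∃ c > (0 : ℝ), ∃ c' > (0 : ℝ), ∃ c'' > (0 : ℝ),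
        ∀ ξ : g, ∀ x : V, x ≠ 0 → ‖x‖⁻¹ • x ∈ U →
          c * (‖x‖ * ‖P ξ‖) ≤ ‖ρ ξ x‖ ∧
          c' * ‖ρ (P ξ) x‖ ≤ ‖ρ ξ x‖ ∧
          c'' * (‖ρ (P ξ) x‖ + ‖ρ (ξ - P ξ) x‖) ≤ ‖ρ ξ x‖ := by
  obtain ⟨C, hC0, hC⟩ := exists_norm_apply_apply_le ρ
  obtain ⟨c, hc0, hc⟩ := (ρ.flip yhat).exists_mul_norm_le_norm_of_mem_orthogonal_ker
  have hPy (ξ : g) : ρ (P ξ) yhat = ρ ξ yhat := by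
    rw [eq_comm, ← sub_eq_zero, ← LinearMap.sub_apply, ← map_sub, (hP ξ).1]
  have hPc (ξ : g) : c * ‖P ξ‖ ≤ ‖ρ (P ξ) yhat‖ :=
    hc _ fun η hη => by rw [real_inner_comm]; exact (hP ξ).2 η hη
  have hi (ξ : g) (x : V) (hx : x ≠ 0) (hxU : ‖x‖⁻¹ • x ∈ ball yhat (c / (2 * C))) :
      c / 2 * (‖x‖ * ‖P ξ‖) ≤ ‖ρ ξ x‖ := by
    rw [mem_ball, dist_eq_norm, lt_div_iff₀ (by positivity)] at hxU
    exact mul_norm_mul_norm_le_norm_apply ρ (hskew ξ) (hcomm ξ (P ξ)) (hC (P ξ)) (hPy ξ)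
      (hPc ξ) hx (by linarith)
  refine ⟨ball yhat (c / (2 * C)), isOpen_ball, mem_ball_self (by positivity),
    c / 2, by positivity, c / (2 * C), by positivity, c / (2 * C) / (2 + c / (2 * C)),
    by positivity, fun ξ x hx hxU => ?_⟩
  have hii : c / (2 * C) * ‖ρ (P ξ) x‖ ≤ ‖ρ ξ x‖ := by
    refine le_trans ?_ (hi ξ x hx hxU)
    calc c / (2 * C) * ‖ρ (P ξ) x‖ ≤ c / (2 * C) * (C * ‖P ξ‖ * ‖x‖) := by gcongr; exact hC _ _
      _ = c / 2 * (‖x‖ * ‖P ξ‖) := by field_simp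
  have hQ : ‖ρ (ξ - P ξ) x‖ ≤ ‖ρ ξ x‖ + ‖ρ (P ξ) x‖ := by
    rw [map_sub, LinearMap.sub_apply]; exact norm_sub_le _ _
  refine ⟨hi ξ x hx hxU, hii, ?_⟩
  have hc' : 0 < c / (2 * C) := by positivity
  rw [div_mul_eq_mul_div, div_le_iff₀ (by positivity)]
  nlinarith [mul_le_mul_of_nonneg_left hQ hc'.le]

/-- **Pointwise estimates for fundamental vector fields of a torus action
(Lemma `KeyEstimate1`).**  `V` is a finite-dimensional complex inner product space and
`𝔤` a finite-dimensional real inner product space realized (via the injective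
`ℝ`-linear map `ρ`) as a subspace of the `ℂ`-linear endomorphisms of `V`, all of whose
elements are skew-adjoint and pairwise commute.  For a unit vector `yhat`, `P` is the
orthogonal projection of `𝔤` onto the orthogonal complement of
`stab yhat = {ξ | ρ ξ yhat = 0}` (characterized by: `ξ - P ξ ∈ stab yhat` and
`P ξ ⟂ stab yhat`), and `Q = id - P`.  Then there are a neighborhood `U` of `yhat` and
constants `c, c', c'' > 0`, depending only on `yhat` and `U`, such that for all `ξ ∈ 𝔤`
and all `x ≠ 0` with `x/‖x‖ ∈ U`:
(i) `‖ξ x‖ ≥ c ‖x‖ ‖P ξ‖`; (ii) `‖ξ x‖ ≥ c' ‖(P ξ) x‖`;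
(iii) `‖ξ x‖ ≥ c'' (‖(P ξ) x‖ + ‖(Q ξ) x‖)`. -/
theorem stmt_7
    {V : Type*} [NormedAddCommGroup V] [InnerProductSpace ℂ V] [FiniteDimensional ℂ V]
    {g : Type*} [NormedAddCommGroup g] [InnerProductSpace ℝ g] [FiniteDimensional ℝ g]
    (ρ : g →ₗ[ℝ] (V →ₗ[ℂ] V)) (hinj : Function.Injective ρ)
    (hskew : ∀ ξ : g, ∀ u v : V, (inner ℂ (ρ ξ u) v : ℂ) = -(inner ℂ u (ρ ξ v) : ℂ))
    (hcomm : ∀ ξ η : g, ∀ v : V, ρ ξ (ρ η v) = ρ η (ρ ξ v))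
    (yhat : V) (hyhat : ‖yhat‖ = 1)
    (P : g → g)
    (hP : ∀ ξ : g, ρ (ξ - P ξ) yhat = 0 ∧
      ∀ η : g, ρ η yhat = 0 → (inner ℝ (P ξ) η : ℝ) = 0) :
    ∃ U : Set V, IsOpen U ∧ yhat ∈ U ∧
      ∃ c > (0 : ℝ), ∃ c' > (0 : ℝ), ∃ c'' > (0 : ℝ),
        ∀ ξ : g, ∀ x : V, x ≠ 0 → ‖x‖⁻¹ • x ∈ U →
          c * (‖x‖ * ‖P ξ‖) ≤ ‖ρ ξ x‖ ∧
          c' * ‖ρ (P ξ) x‖ ≤ ‖ρ ξ x‖ ∧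
          c'' * (‖ρ (P ξ) x‖ + ‖ρ (ξ - P ξ) x‖) ≤ ‖ρ ξ x‖ :=
  stmt_7_general ρ hskew hcomm yhat P hP
end

section
/- Let X be a set, E a finite-dimensional real inner product space, μ : X → E a map, f = ‖μ‖², and g : X → ℝ any function. Fix f_c ≥ 0. Suppose that for every μ_c ∈ E with ‖μ_c‖² = f_c there exist constants ε' > 0 and c' > 0 (depending on μ_c) such that g(x) ≥ c'·|f(x) − f_c|^{3/4} for all x with ‖μ(x) − μ_c‖ < ε'. Then there exist constants ε > 0 and c > 0 such that g(x) ≥ c·|f(x) − f_c|^{3/4} for all x with |f(x) − f_c| < ε. -/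
/-! The sphere `‖μc‖² = fc` is compact, so finitely many of the local estimates cover it and
yield one constant valid on a uniform neighbourhood of it. If `|f x - fc| < δ²`, the radial
projection of `μ x` onto the sphere lies within `|‖μ x‖ - √fc| ≤ √|f x - fc| < δ` of `μ x`. -/

open Metric

lemma sq_sub_le_abs_sq_sub_sq {a b : ℝ} (ha : 0 ≤ a) (hb : 0 ≤ b) :
    (a - b) ^ 2 ≤ |a ^ 2 - b ^ 2| := by
  rcases le_total b a with hab | hab
  · rw [abs_of_nonneg (by nlinarith)]; nlinarith
  · rw [abs_of_nonpos (by nlinarith)]; nlinarith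

theorem exists_mem_sphere_dist_eq_abs_sub {E : Type*} [NormedAddCommGroup E] [NormedSpace ℝ E]
    {r : ℝ} (hr : (sphere (0 : E) r).Nonempty) (y : E) :
    ∃ q ∈ sphere (0 : E) r, dist y q = |‖y‖ - r| := by
  have hr₀ : 0 ≤ r := nonempty_closedBall.1 (hr.mono sphere_subset_closedBall)
  rcases eq_or_ne y 0 with rfl | hy
  · obtain ⟨q, hq⟩ := hr
    refine ⟨q, hq, ?_⟩
    rw [mem_sphere_zero_iff_norm] at hq
    simp [hq, abs_of_nonneg hr₀]
  · have hy' : 0 < ‖y‖ := norm_pos_iff.2 hy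
    refine ⟨(r / ‖y‖) • y, ?_, ?_⟩
    · rw [mem_sphere_zero_iff_norm, norm_smul, Real.norm_of_nonneg (by positivity)]
      field_simp
    · have hsub : y - (r / ‖y‖) • y = ((‖y‖ - r) / ‖y‖) • y := by
        rw [sub_div, div_self hy'.ne', sub_smul, one_smul]
      rw [dist_eq_norm, hsub, norm_smul, Real.norm_eq_abs, abs_div, abs_norm,
        div_mul_cancel₀ _ hy'.ne']

theorem IsCompact.exists_uniform_mul_le_of_forall_ball {α X : Type*} [PseudoMetricSpace α]
    {K : Set α} (hK : IsCompact K) (φ : X → α) {h g : X → ℝ} (hh : ∀ x, 0 ≤ h x)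
    (H : ∀ p ∈ K, ∃ ε > 0, ∃ c > 0, ∀ x, dist (φ x) p < ε → c * h x ≤ g x) :
    ∃ δ > 0, ∃ c > 0, ∀ x, ∀ q ∈ K, dist (φ x) q < δ → c * h x ≤ g x := by
  refine hK.induction_on
    (p := fun s ↦ ∃ δ > 0, ∃ c > 0, ∀ x, ∀ q ∈ s, dist (φ x) q < δ → c * h x ≤ g x)
    ⟨1, one_pos, 1, one_pos, by simp⟩ ?_ ?_ ?_
  · rintro s t hst ⟨δ, hδ, c, hc, hbound⟩
    exact ⟨δ, hδ, c, hc, fun x q hq ↦ hbound x q (hst hq)⟩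
  · rintro s t ⟨δ, hδ, c, hc, hs⟩ ⟨δ', hδ', c', hc', ht⟩
    refine ⟨min δ δ', lt_min hδ hδ', min c c', lt_min hc hc', fun x q hq hxq ↦ ?_⟩
    rcases hq with hq | hq
    · exact (mul_le_mul_of_nonneg_right (min_le_left c c') (hh x)).trans
        (hs x q hq (hxq.trans_le (min_le_left _ _)))
    · exact (mul_le_mul_of_nonneg_right (min_le_right c c') (hh x)).trans
        (ht x q hq (hxq.trans_le (min_le_right _ _)))
  · intro p hp
    obtain ⟨ε, hε, c, hc, hbound⟩ := H p hp
    refine ⟨ball p (ε / 2), mem_nhdsWithin_of_mem_nhds (ball_mem_nhds p (half_pos hε)),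
      ε / 2, half_pos hε, c, hc, fun x q hq hxq ↦ hbound x ?_⟩
    calc dist (φ x) p ≤ dist (φ x) q + dist q p := dist_triangle _ _ _
      _ < ε / 2 + ε / 2 := add_lt_add hxq hq
      _ = ε := add_halves ε

/-- **Compactness patching step for the global Łojasiewicz inequality.**
Let `μ : X → E` (with `E` a finite-dimensional real inner product space),
`f = ‖μ‖²`, `g : X → ℝ` and `f_c ≥ 0`.  If for every `μ_c ∈ E` with `‖μ_c‖² = f_c`
there are `ε' > 0` and `c' > 0` such that `g x ≥ c' |f x - f_c| ^ (3/4)` whenever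
`‖μ x - μ_c‖ < ε'`, then there are `ε > 0` and `c > 0` such that
`g x ≥ c |f x - f_c| ^ (3/4)` whenever `|f x - f_c| < ε`. -/
theorem stmt_8
    {X : Type*} {E : Type*} [NormedAddCommGroup E] [InnerProductSpace ℝ E]
    [FiniteDimensional ℝ E]
    (μ : X → E) (f : X → ℝ) (hf : ∀ x, f x = ‖μ x‖ ^ 2)
    (g : X → ℝ) (fc : ℝ) (hfc : 0 ≤ fc)
    (H : ∀ μc : E, ‖μc‖ ^ 2 = fc → ∃ ε' > (0 : ℝ), ∃ c' > (0 : ℝ),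
      ∀ x : X, ‖μ x - μc‖ < ε' → c' * |f x - fc| ^ (3 / 4 : ℝ) ≤ g x) :
    ∃ ε > (0 : ℝ), ∃ c > (0 : ℝ), ∀ x : X, |f x - fc| < ε →
      c * |f x - fc| ^ (3 / 4 : ℝ) ≤ g x := by
  rcases (sphere (0 : E) √fc).eq_empty_or_nonempty with hK | hK
  · have : Subsingleton E := not_nontrivial_iff_subsingleton.1 fun _ ↦
      (NormedSpace.sphere_nonempty.2 (Real.sqrt_nonneg fc)).ne_empty hK
    have hfc₀ : 0 < fc := hfc.lt_of_ne fun h ↦ by simp [← h] at hK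
    refine ⟨fc, hfc₀, 1, one_pos, fun x hx ↦ absurd hx ?_⟩
    simp [hf, Subsingleton.elim (μ x) 0, abs_of_pos hfc₀]
  obtain ⟨δ, hδ, c, hc, hbound⟩ :=
    (isCompact_sphere (0 : E) √fc).exists_uniform_mul_le_of_forall_ball μ
      (fun x ↦ Real.rpow_nonneg (abs_nonneg (f x - fc)) _) fun p hp ↦ by
      simpa [dist_eq_norm] using H p (by rw [mem_sphere_zero_iff_norm.1 hp, Real.sq_sqrt hfc])
  refine ⟨δ ^ 2, by positivity, c, hc, fun x hx ↦ ?_⟩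
  obtain ⟨q, hq, hdist⟩ := exists_mem_sphere_dist_eq_abs_sub hK (μ x)
  refine hbound x q hq (hdist ▸ abs_lt_of_sq_lt_sq ?_ hδ.le)
  calc (‖μ x‖ - √fc) ^ 2 ≤ |‖μ x‖ ^ 2 - √fc ^ 2| :=
        sq_sub_le_abs_sq_sub_sq (norm_nonneg _) (Real.sqrt_nonneg fc)
    _ < δ ^ 2 := by rwa [Real.sq_sqrt hfc, ← hf]
end

section
/- Define μ_I = μ_r, μ_J(x,y) = Re μ_c(x,y) ∈ ℝʳ and μ_K(x,y) = Im μ_c(x,y) ∈ ℝʳ (real and imaginary parts taken componentwise), and set f_I = ‖μ_I‖², f_J = ‖μ_J‖², f_K = ‖μ_K‖². Then at every point of ℂᴺ × ℂᴺ the gradients of these three functions are pairwise orthogonal: ⟨∇f_I, ∇f_J⟩ = ⟨∇f_I, ∇f_K⟩ = ⟨∇f_J, ∇f_K⟩ = 0. -/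
/-!
Each of `f_I, f_J, f_K` is `‖μ‖²` for a map `μ = (μ_a)_a` into `ℝʳ`, whose gradient is
`2 ∑_a μ_a ∇μ_a`; so it suffices that the gradients of the components are pairwise orthogonal.
At `z = (x, y)` one has `∇μ_{I,a} = (β_a x, -β_a y)`. The complex moment map is holomorphic,
with complex gradient `v_b = (β_b ȳ, β_b x̄)`, hence `∇μ_{J,b} = v_b` and `∇μ_{K,b} = i v_b`.
Now `⟪∇μ_{I,a}, v_b⟫_ℂ = ∑_j β_a β_b (x̄_j ȳ_j - ȳ_j x̄_j) = 0`, and `⟪v_a, v_b⟫_ℂ` is real, which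
gives all three relations after taking real parts.
-/

open InnerProductSpace Finset ComplexConjugate

namespace HasGradientAt

variable {𝕜 F : Type*} [RCLike 𝕜] [NormedAddCommGroup F] [InnerProductSpace 𝕜 F] [CompleteSpace F]
  {f g : F → 𝕜} {f' g' x : F}

theorem sub (hf : HasGradientAt f f' x) (hg : HasGradientAt g g' x) :
    HasGradientAt (fun w => f w - g w) (f' - g') x := by
  rw [hasGradientAt_iff_hasFDerivAt] at *
  rw [map_sub]
  exact hf.sub hg

theorem sub_const (hf : HasGradientAt f f' x) (c : 𝕜) :
    HasGradientAt (fun w => f w - c) f' x := by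
  rw [hasGradientAt_iff_hasFDerivAt] at *
  exact hf.sub_const c

theorem fun_sum {ι : Type*} {s : Finset ι} {f : ι → F → 𝕜} {f' : ι → F}
    (hf : ∀ i ∈ s, HasGradientAt (f i) (f' i) x) :
    HasGradientAt (fun w => ∑ i ∈ s, f i w) (∑ i ∈ s, f' i) x := by
  simp only [hasGradientAt_iff_hasFDerivAt, map_sum] at *
  exact HasFDerivAt.fun_sum hf

theorem const_mul (hf : HasGradientAt f f' x) (c : 𝕜) :
    HasGradientAt (fun w => c * f w) (conj c • f') x := by
  rw [hasGradientAt_iff_hasFDerivAt] at *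
  rw [map_smulₛₗ, RCLike.conj_conj]
  exact hf.const_mul c

theorem mul_const (hf : HasGradientAt f f' x) (c : 𝕜) :
    HasGradientAt (fun w => f w * c) (conj c • f') x := by
  simpa only [mul_comm] using hf.const_mul c

theorem mul (hf : HasGradientAt f f' x) (hg : HasGradientAt g g' x) :
    HasGradientAt (fun w => f w * g w) (conj (f x) • g' + conj (g x) • f') x := by
  rw [hasGradientAt_iff_hasFDerivAt] at *
  rw [map_add, map_smulₛₗ, map_smulₛₗ, RCLike.conj_conj, RCLike.conj_conj]
  exact hf.mul hg

end HasGradientAt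

section EuclideanSpace

variable {ι : Type*} [Fintype ι]

/-- Mathlib's `real_inner_eq_re_inner` concerns the instance `Inner.rclikeToReal`, not the
componentwise real inner product that `EuclideanSpace ℂ ι` carries. -/
theorem EuclideanSpace.real_inner_eq_re_inner (u v : EuclideanSpace ℂ ι) :
    ⟪u, v⟫_ℝ = (⟪u, v⟫_ℂ).re := by
  simp [PiLp.inner_apply, Complex.inner, Complex.re_sum]

section ReIm

variable {G z : EuclideanSpace ℂ ι} {f : EuclideanSpace ℂ ι → ℂ}

theorem HasGradientAt.re (hf : HasGradientAt f G z) :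
    HasGradientAt (fun w => (f w).re) G z := by
  rw [hasGradientAt_iff_hasFDerivAt] at *
  refine (Complex.reCLM.hasFDerivAt.comp z (hf.restrictScalars ℝ)).congr_fderiv ?_
  ext v
  simp [EuclideanSpace.real_inner_eq_re_inner]

theorem HasGradientAt.im (hf : HasGradientAt f G z) :
    HasGradientAt (fun w => (f w).im) (Complex.I • G) z := by
  rw [hasGradientAt_iff_hasFDerivAt] at *
  refine (Complex.imCLM.hasFDerivAt.comp z (hf.restrictScalars ℝ)).congr_fderiv ?_
  ext v
  simp [EuclideanSpace.real_inner_eq_re_inner]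

end ReIm

variable [DecidableEq ι]

theorem hasGradientAt_apply {𝕜 : Type*} [RCLike 𝕜] (b : ι) (z : EuclideanSpace 𝕜 ι) :
    HasGradientAt (fun w : EuclideanSpace 𝕜 ι => w b) (EuclideanSpace.single b 1) z := by
  rw [hasGradientAt_iff_hasFDerivAt]
  refine (EuclideanSpace.proj b (𝕜 := 𝕜)).hasFDerivAt.congr_fderiv ?_
  ext v
  simp [EuclideanSpace.inner_single_left]

theorem hasGradientAt_norm_apply_sq (b : ι) (z : EuclideanSpace ℂ ι) :
    HasGradientAt (fun w : EuclideanSpace ℂ ι => ‖w b‖ ^ 2)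
      (2 • EuclideanSpace.single b (z b)) z := by
  rw [hasGradientAt_iff_hasFDerivAt]
  refine ((EuclideanSpace.proj b (𝕜 := ℂ)).restrictScalars ℝ).hasFDerivAt.norm_sq.congr_fderiv ?_
  ext v
  simp [EuclideanSpace.real_inner_eq_re_inner, EuclideanSpace.inner_single_left, mul_comm]

end EuclideanSpace

noncomputable section MomentMap

variable {ι : Type*} [Fintype ι] (c : ι → ℝ) (z : EuclideanSpace ℂ (ι ⊕ ι))

def realMomentGrad : EuclideanSpace ℂ (ι ⊕ ι) :=
  WithLp.toLp 2 (Sum.elim (fun j => c j * z (Sum.inl j)) fun j => -(c j * z (Sum.inr j)))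

def complexMomentGrad : EuclideanSpace ℂ (ι ⊕ ι) :=
  WithLp.toLp 2 (Sum.elim (fun j => c j * conj (z (Sum.inr j))) fun j => c j * conj (z (Sum.inl j)))

theorem hasGradientAt_realMoment [DecidableEq ι] (t : ℝ) :
    HasGradientAt (fun w : EuclideanSpace ℂ (ι ⊕ ι) =>
      (1 / 2 : ℝ) * (∑ j, (‖w (Sum.inl j)‖ ^ 2 - ‖w (Sum.inr j)‖ ^ 2) * c j) - t)
      (realMomentGrad c z) z := by
  have h := ((HasGradientAt.fun_sum (s := univ) fun j _ =>
    ((hasGradientAt_norm_apply_sq (Sum.inl j) z).sub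
      (hasGradientAt_norm_apply_sq (Sum.inr j) z)).mul_const (c j)).const_mul (1 / 2 : ℝ)).sub_const t
  convert h using 1
  ext (j | j) <;> simp [realMomentGrad, Pi.single_apply, mul_left_comm]

theorem hasGradientAt_complexMoment [DecidableEq ι] (t : ℂ) :
    HasGradientAt (fun w : EuclideanSpace ℂ (ι ⊕ ι) =>
      (∑ j, w (Sum.inl j) * w (Sum.inr j) * (c j : ℂ)) - t) (complexMomentGrad c z) z := by
  have h := (HasGradientAt.fun_sum (s := univ) fun j _ =>
    ((hasGradientAt_apply (Sum.inl j) z).mul (hasGradientAt_apply (Sum.inr j) z)).mul_const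
      (c j : ℂ)).sub_const t
  convert h using 1
  ext (j | j) <;> simp [complexMomentGrad, Pi.single_apply]

theorem inner_realMomentGrad_complexMomentGrad (c' : ι → ℝ) :
    ⟪realMomentGrad c z, complexMomentGrad c' z⟫_ℂ = 0 := by
  rw [PiLp.inner_apply, Fintype.sum_sum_type, ← sum_add_distrib]
  exact sum_eq_zero fun j _ => by simp [realMomentGrad, complexMomentGrad, mul_comm, mul_left_comm]

theorem real_inner_realMomentGrad_complexMomentGrad (c' : ι → ℝ) :
    ⟪realMomentGrad c z, complexMomentGrad c' z⟫_ℝ = 0 := by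
  rw [EuclideanSpace.real_inner_eq_re_inner, inner_realMomentGrad_complexMomentGrad, Complex.zero_re]

theorem real_inner_realMomentGrad_I_smul_complexMomentGrad (c' : ι → ℝ) :
    ⟪realMomentGrad c z, Complex.I • complexMomentGrad c' z⟫_ℝ = 0 := by
  rw [EuclideanSpace.real_inner_eq_re_inner, inner_smul_right,
    inner_realMomentGrad_complexMomentGrad, mul_zero, Complex.zero_re]

theorem real_inner_complexMomentGrad_I_smul_complexMomentGrad (c' : ι → ℝ) :
    ⟪complexMomentGrad c z, Complex.I • complexMomentGrad c' z⟫_ℝ = 0 := by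
  rw [EuclideanSpace.real_inner_eq_re_inner, inner_smul_right, Complex.I_mul_re, neg_eq_zero,
    PiLp.inner_apply, Fintype.sum_sum_type, ← sum_add_distrib, Complex.im_sum]
  exact sum_eq_zero fun j _ => by
    simp only [complexMomentGrad, Sum.elim_inl, Sum.elim_inr, RCLike.inner_apply, map_mul,
      Complex.conj_ofReal, Complex.conj_conj, Complex.add_im, Complex.mul_im, Complex.mul_re,
      Complex.ofReal_re, Complex.ofReal_im, Complex.conj_re, Complex.conj_im]
    ring

end MomentMap

section NormSq

variable {F : Type*} [NormedAddCommGroup F] [InnerProductSpace ℝ F] [CompleteSpace F]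
  {κ : Type*} [Fintype κ] {z : F}

theorem hasGradientAt_norm_sq {g : F → EuclideanSpace ℝ κ} {G : κ → F}
    (hg : ∀ a, HasGradientAt (fun w => g w a) (G a) z) :
    HasGradientAt (fun w => ‖g w‖ ^ 2) (∑ a, (2 * g z a) • G a) z := by
  simp_rw [EuclideanSpace.real_norm_sq_eq, sq]
  convert HasGradientAt.fun_sum (s := univ) fun a _ => (hg a).mul (hg a) using 1
  simp [two_mul, add_smul]

theorem inner_gradient_norm_sq_eq_zero {g h : F → EuclideanSpace ℝ κ} {G H : κ → F}
    (hg : ∀ a, HasGradientAt (fun w => g w a) (G a) z)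
    (hh : ∀ a, HasGradientAt (fun w => h w a) (H a) z) (horth : ∀ a b, ⟪G a, H b⟫_ℝ = 0) :
    ⟪gradient (fun w => ‖g w‖ ^ 2) z, gradient (fun w => ‖h w‖ ^ 2) z⟫_ℝ = 0 := by
  rw [(hasGradientAt_norm_sq hg).gradient, (hasGradientAt_norm_sq hh).gradient]
  simp [sum_inner, inner_sum, real_inner_smul_left, real_inner_smul_right, horth]

end NormSq

/-- **Pairwise orthogonality of the gradients of the three hyperkähler moment map
norm-squares for a torus action (Lemma `CrossTermVanish`).**  On
`T*ℂᴺ = ℂᴺ × ℂᴺ` (modelled as `EuclideanSpace ℂ (Fin N ⊕ Fin N)`, with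
`x j = z (Sum.inl j)`, `y j = z (Sum.inr j)`), let `μ_I = μ_r`,
`μ_J = Re μ_c`, `μ_K = Im μ_c`, and `f_I = ‖μ_I‖²`, `f_J = ‖μ_J‖²`, `f_K = ‖μ_K‖²`.
Then at every point the real inner products of the gradients of `f_I, f_J, f_K`
vanish pairwise. -/
theorem stmt_9
    (N r : ℕ) (β : Fin N → Fin r → ℝ)
    (αR : EuclideanSpace ℝ (Fin r)) (αC : EuclideanSpace ℂ (Fin r))
    (μr : EuclideanSpace ℂ (Fin N ⊕ Fin N) → EuclideanSpace ℝ (Fin r))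
    (hμr : ∀ z : EuclideanSpace ℂ (Fin N ⊕ Fin N), ∀ a : Fin r,
      μr z a = (1 / 2 : ℝ) * (∑ j, (‖z (Sum.inl j)‖ ^ 2 - ‖z (Sum.inr j)‖ ^ 2) * β j a)
        - αR a)
    (μc : EuclideanSpace ℂ (Fin N ⊕ Fin N) → EuclideanSpace ℂ (Fin r))
    (hμc : ∀ z : EuclideanSpace ℂ (Fin N ⊕ Fin N), ∀ a : Fin r,
      μc z a = (∑ j, z (Sum.inl j) * z (Sum.inr j) * (β j a : ℂ)) - αC a)
    (μJ μK : EuclideanSpace ℂ (Fin N ⊕ Fin N) → EuclideanSpace ℝ (Fin r))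
    (hμJ : ∀ z a, μJ z a = (μc z a).re)
    (hμK : ∀ z a, μK z a = (μc z a).im)
    (fI fJ fK : EuclideanSpace ℂ (Fin N ⊕ Fin N) → ℝ)
    (hfI : ∀ z, fI z = ‖μr z‖ ^ 2)
    (hfJ : ∀ z, fJ z = ‖μJ z‖ ^ 2)
    (hfK : ∀ z, fK z = ‖μK z‖ ^ 2)
    (z : EuclideanSpace ℂ (Fin N ⊕ Fin N)) :
    (inner ℝ (gradient fI z) (gradient fJ z) : ℝ) = 0 ∧
    (inner ℝ (gradient fI z) (gradient fK z) : ℝ) = 0 ∧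
    (inner ℝ (gradient fJ z) (gradient fK z) : ℝ) = 0 := by
  have hI a : HasGradientAt (fun w => μr w a) (realMomentGrad (β · a) z) z :=
    (hasGradientAt_realMoment (β · a) z (αR a)).congr_of_eventuallyEq (.of_forall (hμr · a))
  have hC a : HasGradientAt (fun w => μc w a) (complexMomentGrad (β · a) z) z :=
    (hasGradientAt_complexMoment (β · a) z (αC a)).congr_of_eventuallyEq (.of_forall (hμc · a))
  have hJ a : HasGradientAt (fun w => μJ w a) (complexMomentGrad (β · a) z) z := by
    simpa only [hμJ] using (hC a).re
  have hK a : HasGradientAt (fun w => μK w a) (Complex.I • complexMomentGrad (β · a) z) z := by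
    simpa only [hμK] using (hC a).im
  obtain rfl : fI = fun w => ‖μr w‖ ^ 2 := funext hfI
  obtain rfl : fJ = fun w => ‖μJ w‖ ^ 2 := funext hfJ
  obtain rfl : fK = fun w => ‖μK w‖ ^ 2 := funext hfK
  exact ⟨inner_gradient_norm_sq_eq_zero hI hJ fun _ _ =>
      real_inner_realMomentGrad_complexMomentGrad _ z _,
    inner_gradient_norm_sq_eq_zero hI hK fun _ _ =>
      real_inner_realMomentGrad_I_smul_complexMomentGrad _ z _,
    inner_gradient_norm_sq_eq_zero hJ hK fun _ _ =>
      real_inner_complexMomentGrad_I_smul_complexMomentGrad _ z _⟩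
end

section
/- (Macaulay/Fourier duality.) Let I ⊆ R be a homogeneous ideal such that S = R/I is finite-dimensional over k, and let S^∨ = {g ∈ R^∨ : D_f g = 0 for all f ∈ I} be its Fourier dual. Then S^∨ is a finitely generated R-submodule of R^∨ and ann_R(S^∨) = I; that is, a polynomial f ∈ R lies in I if and only if D_f g = 0 for every polynomial g that is annihilated by all elements of I. -/
open MvPolynomial

/-- The differential operator associated to a monomial `m`: the composition of the
partial derivatives `∂/∂λᵢ` iterated `m i` times. -/
noncomputable def Dmon {k : Type*} [CommSemiring k] {n : ℕ} (m : Fin n →₀ ℕ) :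
    Module.End k (MvPolynomial (Fin n) k) :=
  (List.ofFn fun i : Fin n =>
    ((pderiv i).toLinearMap : Module.End k (MvPolynomial (Fin n) k)) ^ m i).prod

/-- The constant-coefficient differential operator `D_f` obtained from a polynomial `f`
by substituting `∂/∂λᵢ` for `Xᵢ`. -/
noncomputable def Dop {k : Type*} [CommSemiring k] {n : ℕ}
    (f : MvPolynomial (Fin n) k) : Module.End k (MvPolynomial (Fin n) k) :=
  ∑ m ∈ f.support, MvPolynomial.coeff m f • Dmon m

/-! The operators `D_f` form a `k`-algebra map `R → End(R^∨)`, and `⟨f, g⟩ := coeff₀ (D_f g)`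
pairs monomials diagonally: `⟨X^m, λ^m'⟩ = m! δ_{m m'}`, with `m! ≠ 0` in characteristic `0`.
Since `⟨X^u f, g⟩ = u! · coeff_u (D_f g)`, the dual `S^∨` is exactly the orthogonal of `I`
under this pairing. A polynomial relation `p(X_i) ∈ I` (which exists as `R/I` is
finite-dimensional) has its top homogeneous component `c X_i^d` in `I`, so only finitely many
monomials lie outside `I`. Hence `S^∨` lies in their finite-dimensional span, and every
functional on `R/I` is represented by some `g ∈ S^∨`; one that does not vanish at `f ∉ I`
gives `D_f g ≠ 0`.
-/

open Finsupp

theorem commute_pderiv {R σ : Type*} [CommSemiring R] (i j : σ) :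
    Commute ((pderiv i).toLinearMap : Module.End R (MvPolynomial σ R)) (pderiv j).toLinearMap := by
  rcases eq_or_ne i j with rfl | hij
  · rfl
  refine LinearMap.ext fun p => MvPolynomial.ext _ _ fun m => ?_
  simp only [Module.End.mul_apply, Derivation.coeFn_coe, coeff_pderiv, Finsupp.add_apply,
    single_eq_of_ne hij, single_eq_of_ne hij.symm, add_zero, add_right_comm m]
  ring

theorem pairwise_commute_pderiv_pow {R σ : Type*} [CommSemiring R] (m : σ →₀ ℕ)
    (s : Set σ) :
    s.Pairwise (Function.onFun Commute
      fun i => ((pderiv i).toLinearMap : Module.End R (MvPolynomial σ R)) ^ m i) :=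
  fun i _ j _ _ => (commute_pderiv i j).pow_pow _ _

section DifferentialOperators

variable {k : Type*} [CommSemiring k] {n : ℕ}

theorem Dmon_eq_noncommProd (m : Fin n →₀ ℕ) :
    (Dmon m : Module.End k (MvPolynomial (Fin n) k)) = Finset.univ.noncommProd
      (fun i => (pderiv i).toLinearMap ^ m i)
      (pairwise_commute_pderiv_pow m _) := by
  simp only [Dmon, Finset.noncommProd, Fin.univ_val_map, Multiset.noncommProd_coe]

theorem Dmon_zero : (Dmon 0 : Module.End k (MvPolynomial (Fin n) k)) = 1 := by
  simp [Dmon]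

theorem Dmon_add (m m' : Fin n →₀ ℕ) :
    (Dmon (m + m') : Module.End k (MvPolynomial (Fin n) k)) = Dmon m * Dmon m' := by
  simp only [Dmon_eq_noncommProd]
  exact (Finset.noncommProd_congr rfl (fun i _ => by simp [pow_add]) _).trans
    (Finset.noncommProd_mul_distrib _ _ _ _ fun i _ j _ _ => (commute_pderiv i j).pow_pow _ _)

theorem Dmon_single_one (i : Fin n) :
    (Dmon (single i 1) : Module.End k (MvPolynomial (Fin n) k)) = (pderiv i).toLinearMap := by
  classical
  rw [Dmon_eq_noncommProd]
  refine (Finset.mul_noncommProd_erase _ (Finset.mem_univ i) _ _).symm.trans ?_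
  rw [single_eq_same, pow_one]
  convert mul_one _
  exact (Finset.noncommProd_eq_pow_card _ _ _ 1
    fun j hj => by rw [single_eq_of_ne (Finset.ne_of_mem_erase hj), pow_zero]).trans (one_pow _)

variable (k n) in
noncomputable def DmonHom :
    Multiplicative (Fin n →₀ ℕ) →* Module.End k (MvPolynomial (Fin n) k) where
  toFun m := Dmon m.toAdd
  map_one' := Dmon_zero
  map_mul' m m' := Dmon_add m.toAdd m'.toAdd

variable (k n) in
noncomputable def DopAlgHom :
    MvPolynomial (Fin n) k →ₐ[k] Module.End k (MvPolynomial (Fin n) k) :=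
  AddMonoidAlgebra.lift k _ _ (DmonHom k n)

theorem coe_DopAlgHom : ⇑(DopAlgHom k n) = Dop := by
  ext1 f
  rw [DopAlgHom, AddMonoidAlgebra.lift_apply]
  rfl

theorem Dop_add (f g : MvPolynomial (Fin n) k) : Dop (f + g) = Dop f + Dop g := by
  simp only [← coe_DopAlgHom, map_add]

theorem Dop_mul (f g : MvPolynomial (Fin n) k) : Dop (f * g) = Dop f * Dop g := by
  simp only [← coe_DopAlgHom, map_mul]

theorem Dop_monomial (m : Fin n →₀ ℕ) (a : k) : Dop (monomial m a) = a • Dmon m := by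
  rw [← coe_DopAlgHom]
  exact AddMonoidAlgebra.lift_single _ _ _

theorem Dop_C (a : k) (g : MvPolynomial (Fin n) k) : Dop (C a) g = a • g := by
  rw [← coe_DopAlgHom, ← algebraMap_eq, AlgHom.commutes, Module.algebraMap_end_apply]

end DifferentialOperators

section Coefficients

open scoped Nat

def multiFactorial {σ : Type*} [Fintype σ] (m : σ →₀ ℕ) : ℕ := ∏ i, (m i)!

variable {σ : Type*} [Fintype σ]

theorem multiFactorial_zero : multiFactorial (0 : σ →₀ ℕ) = 1 := by
  simp [multiFactorial]

theorem multiFactorial_ne_zero (m : σ →₀ ℕ) : multiFactorial m ≠ 0 :=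
  Finset.prod_ne_zero_iff.mpr fun _ _ => Nat.factorial_ne_zero _

theorem multiFactorial_add_single_one (u : σ →₀ ℕ) (i : σ) :
    multiFactorial (u + single i 1) = multiFactorial u * (u i + 1) := by
  classical
  unfold multiFactorial
  rw [← Finset.mul_prod_erase _ _ (Finset.mem_univ i),
    ← Finset.mul_prod_erase _ _ (Finset.mem_univ i),
    Finset.prod_congr rfl (g := fun j => (u j)!) fun j hj => by
      rw [Finsupp.add_apply, single_eq_of_ne (Finset.ne_of_mem_erase hj), add_zero]]
  simp only [Finsupp.add_apply, single_eq_same, Nat.factorial_succ]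
  ring

theorem multiFactorial_mul_coeff_pderiv {R : Type*} [CommSemiring R] (i : σ) (u : σ →₀ ℕ)
    (p : MvPolynomial σ R) :
    (multiFactorial u : R) * coeff u (pderiv i p)
      = multiFactorial (u + single i 1) * coeff (u + single i 1) p := by
  rw [coeff_pderiv, multiFactorial_add_single_one]
  push_cast
  ring

end Coefficients

section Pairing

variable {k : Type*} {n : ℕ}

theorem multiFactorial_mul_coeff_Dmon [CommSemiring k] (m u : Fin n →₀ ℕ)
    (q : MvPolynomial (Fin n) k) :
    (multiFactorial u : k) * coeff u (Dmon m q) = multiFactorial (u + m) * coeff (u + m) q := by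
  induction m using Finsupp.induction_linear generalizing u q with
  | zero => simp [Dmon_zero]
  | add m m' hm hm' => rw [Dmon_add, Module.End.mul_apply, hm, hm', add_assoc]
  | single i b =>
    induction b generalizing u q with
    | zero => simp [Dmon_zero]
    | succ b ih =>
      rw [single_add, Dmon_add, Module.End.mul_apply, ih, Dmon_single_one, Derivation.coeFn_coe,
        multiFactorial_mul_coeff_pderiv, add_assoc]

theorem coeff_zero_Dmon [CommSemiring k] (m : Fin n →₀ ℕ) (q : MvPolynomial (Fin n) k) :
    coeff 0 (Dmon m q) = multiFactorial m * coeff m q := by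
  simpa [multiFactorial_zero] using multiFactorial_mul_coeff_Dmon m 0 q

theorem coeff_zero_Dop_monomial_mul [CommSemiring k] (u : Fin n →₀ ℕ)
    (f g : MvPolynomial (Fin n) k) :
    coeff 0 (Dop (monomial u 1 * f) g) = multiFactorial u * coeff u (Dop f g) := by
  rw [Dop_mul, Dop_monomial, one_smul, Module.End.mul_apply, coeff_zero_Dmon]

variable [Field k] [CharZero k]

theorem forall_Dop_eq_zero_iff (I : Ideal (MvPolynomial (Fin n) k))
    (g : MvPolynomial (Fin n) k) :
    (∀ f ∈ I, Dop f g = 0) ↔ ∀ f ∈ I, coeff 0 (Dop f g) = 0 := by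
  refine ⟨fun h f hf => by rw [h f hf, coeff_zero],
    fun h f hf => MvPolynomial.ext _ _ fun u => ?_⟩
  have := h _ (I.mul_mem_left (monomial u 1) hf)
  rw [coeff_zero_Dop_monomial_mul] at this
  simpa [multiFactorial_ne_zero] using this

theorem exists_coeff_zero_Dop_eq (φ : MvPolynomial (Fin n) k →ₗ[k] k)
    (hφ : {m | φ (monomial m 1) ≠ 0}.Finite) :
    ∃ g : MvPolynomial (Fin n) k, ∀ f, coeff 0 (Dop f g) = φ f := by
  classical
  set g := ∑ m ∈ hφ.toFinset, monomial m ((multiFactorial m : k)⁻¹ * φ (monomial m 1))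
  have hg (u : Fin n →₀ ℕ) : multiFactorial u * coeff u g = φ (monomial u 1) := by
    have hfac : (multiFactorial u : k) ≠ 0 := by exact_mod_cast multiFactorial_ne_zero u
    rw [coeff_sum, Finset.sum_eq_single u (fun m _ hmu => by rw [coeff_monomial, if_neg hmu])
      fun hu => by
        rw [coeff_monomial, if_pos rfl, not_not.mp (hu <| hφ.mem_toFinset.mpr ·), mul_zero],
      coeff_monomial, if_pos rfl, mul_inv_cancel_left₀ hfac]
  refine ⟨g, fun f => ?_⟩
  induction f using MvPolynomial.induction_on' with
  | add p q hp hq => rw [Dop_add, LinearMap.add_apply, coeff_add, hp, hq, map_add]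
  | monomial u a =>
    rw [Dop_monomial, LinearMap.smul_apply, coeff_smul, coeff_zero_Dmon, hg, ← map_smul,
      smul_monomial, smul_eq_mul, mul_one]

end Pairing

section MonomialsOfArtinianHomogeneousIdeals

variable {σ k : Type*} [Field k] {I : Ideal (MvPolynomial σ k)}

theorem exists_X_pow_mem (hI : ∀ f ∈ I, ∀ d : ℕ, homogeneousComponent d f ∈ I)
    [FiniteDimensional k (MvPolynomial σ k ⧸ I)] (i : σ) :
    ∃ d, (X i : MvPolynomial σ k) ^ d ∈ I := by
  obtain ⟨p, hp0, hp⟩ := Algebra.IsAlgebraic.isAlgebraic (R := k) (Ideal.Quotient.mk I (X i))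
  have hpI : Polynomial.aeval (X i) p ∈ I := by
    rwa [← Ideal.Quotient.mkₐ_eq_mk k, Polynomial.aeval_algHom_apply,
      Ideal.Quotient.mkₐ_eq_mk k, Ideal.Quotient.eq_zero_iff_mem] at hp
  have hcomp : homogeneousComponent p.natDegree (Polynomial.aeval (X i : MvPolynomial σ k) p)
      = p.leadingCoeff • X i ^ p.natDegree := by
    rw [Polynomial.aeval_eq_sum_range, map_sum, Finset.sum_eq_single p.natDegree]
    · rw [map_smul, homogeneousComponent_of_mem (isHomogeneous_X_pow i _), if_pos rfl]
      rfl
    · intro j _ hj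
      rw [map_smul, homogeneousComponent_of_mem (isHomogeneous_X_pow i _), if_neg hj.symm,
        smul_zero]
    · simp
  refine ⟨p.natDegree, ?_⟩
  have := I.smul_of_tower_mem p.leadingCoeff⁻¹ (hcomp ▸ hI _ hpI p.natDegree)
  rwa [inv_smul_smul₀ (Polynomial.leadingCoeff_ne_zero.mpr hp0)] at this

theorem finite_setOf_monomial_notMem [Finite σ]
    (hI : ∀ f ∈ I, ∀ d : ℕ, homogeneousComponent d f ∈ I)
    [FiniteDimensional k (MvPolynomial σ k ⧸ I)] :
    {m : σ →₀ ℕ | monomial m (1 : k) ∉ I}.Finite := by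
  classical
  choose e he using exists_X_pow_mem hI
  refine (Set.finite_Iic (equivFunOnFinite.symm e)).subset fun m hm => ?_
  refine Finsupp.le_def.mpr fun i => ?_
  by_contra! hlt
  refine hm (I.mem_of_dvd ?_ (he i))
  rw [X_pow_eq_monomial, monomial_dvd_monomial]
  exact ⟨Or.inr (single_le_iff.mpr hlt.le), dvd_rfl⟩

end MonomialsOfArtinianHomogeneousIdeals

section FourierDual

variable {k : Type*} {n : ℕ}

def fourierDual [CommSemiring k] (I : Ideal (MvPolynomial (Fin n) k)) :
    Submodule k (MvPolynomial (Fin n) k) where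
  carrier := {g | ∀ f ∈ I, Dop f g = 0}
  add_mem' hg hg' f hf := by rw [map_add, hg f hf, hg' f hf, add_zero]
  zero_mem' f _ := map_zero (Dop f)
  smul_mem' c g hg f hf := by rw [map_smul, hg f hf, smul_zero]

theorem mem_fourierDual [CommSemiring k] {I : Ideal (MvPolynomial (Fin n) k)}
    {g : MvPolynomial (Fin n) k} : g ∈ fourierDual I ↔ ∀ f ∈ I, Dop f g = 0 :=
  Iff.rfl

variable [Field k] [CharZero k] {I : Ideal (MvPolynomial (Fin n) k)}

theorem fourierDual_le_restrictSupport :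
    fourierDual I ≤ restrictSupport k {m | monomial m 1 ∉ I} := by
  intro g hg m hm hmI
  have := congrArg (coeff 0) (hg _ hmI)
  rw [Dop_monomial, one_smul, coeff_zero_Dmon, coeff_zero] at this
  exact MvPolynomial.mem_support_iff.mp hm
    ((mul_eq_zero.mp this).resolve_left (by exact_mod_cast multiFactorial_ne_zero m))

theorem fourierDual_fg (hI : ∀ f ∈ I, ∀ d : ℕ, homogeneousComponent d f ∈ I)
    [FiniteDimensional k (MvPolynomial (Fin n) k ⧸ I)] : (fourierDual I).FG := by
  refine Submodule.FG.of_le ?_ fourierDual_le_restrictSupport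
  rw [restrictSupport_eq_span]
  exact Submodule.fg_span ((finite_setOf_monomial_notMem hI).image _)

theorem mem_iff_forall_mem_fourierDual
    (hI : ∀ f ∈ I, ∀ d : ℕ, homogeneousComponent d f ∈ I)
    [FiniteDimensional k (MvPolynomial (Fin n) k ⧸ I)] (f : MvPolynomial (Fin n) k) :
    f ∈ I ↔ ∀ g ∈ fourierDual I, Dop f g = 0 := by
  refine ⟨fun hf g hg => hg f hf, fun h => ?_⟩
  by_contra hf
  obtain ⟨φ, hφf, hφI⟩ :=
    Submodule.exists_dual_map_eq_bot_of_notMem (p := I.restrictScalars k) hf inferInstance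
  replace hφI : ∀ x ∈ I, φ x = 0 := fun x hx => LinearMap.le_ker_iff_map.mpr hφI hx
  obtain ⟨g, hg⟩ := exists_coeff_zero_Dop_eq φ
    ((finite_setOf_monomial_notMem hI).subset fun m hm hmI => hm (hφI _ hmI))
  have hgI : g ∈ fourierDual I :=
    (forall_Dop_eq_zero_iff I g).mpr fun f' hf' => (hg f').trans (hφI f' hf')
  exact hφf (by rw [← hg, h g hgI, coeff_zero])

end FourierDual

/-- **Macaulay/Fourier duality.**  Let `k` be a field of characteristic `0`,
`R = k[X₁,…,Xₙ]`, and `I ⊆ R` a homogeneous ideal with `S = R/I` finite-dimensional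
over `k`.  Let `S^∨ = {g : D_f g = 0 for all f ∈ I}` be the Fourier dual of `S`.
Then `S^∨` is a finitely generated `R`-submodule of `R^∨` (every element of `S^∨`
is an `R`-combination, via the operators `D`, of a fixed finite subset of `S^∨`),
and `ann_R(S^∨) = I`: a polynomial `f` lies in `I` iff `D_f g = 0` for every `g`
annihilated by all elements of `I`. -/
theorem stmt_10
    {k : Type*} [Field k] [CharZero k] {n : ℕ}
    (I : Ideal (MvPolynomial (Fin n) k))
    (hI : ∀ f ∈ I, ∀ d : ℕ, MvPolynomial.homogeneousComponent d f ∈ I)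
    (hfin : FiniteDimensional k (MvPolynomial (Fin n) k ⧸ I)) :
    (∃ s : Finset (MvPolynomial (Fin n) k),
      (∀ g ∈ s, ∀ f ∈ I, Dop f g = 0) ∧
      ∀ g : MvPolynomial (Fin n) k, (∀ f ∈ I, Dop f g = 0) →
        ∃ c : MvPolynomial (Fin n) k → MvPolynomial (Fin n) k,
          g = ∑ h ∈ s, Dop (c h) h) ∧
    ∀ f : MvPolynomial (Fin n) k,
      f ∈ I ↔ ∀ g : MvPolynomial (Fin n) k, (∀ f' ∈ I, Dop f' g = 0) → Dop f g = 0 := by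
  refine ⟨?_, mem_iff_forall_mem_fourierDual hI⟩
  obtain ⟨s, hs⟩ := fourierDual_fg hI
  refine ⟨s, fun g hg => mem_fourierDual.mp (hs ▸ Submodule.subset_span hg), fun g hg => ?_⟩
  obtain ⟨c, -, rfl⟩ := Submodule.mem_span_finset.mp (hs.symm ▸ mem_fourierDual.mpr hg)
  exact ⟨fun h => C (c h), Finset.sum_congr rfl fun h _ => (Dop_C _ _).symm⟩
end

section
/- Let H be a group acting on a set X, G a normal subgroup of H acting freely on X, and x̃ ∈ X a point such that for every h ∈ H there exists g ∈ G with h·x̃ = g·x̃; let φ : H → G be the unique map with h·x̃ = φ(h)·x̃ for all h. Then the set ker φ = {h ∈ H : φ(h) = 1} is a subgroup of H, and the restriction to ker φ of the quotient homomorphism H → H/G is a group isomorphism from ker φ onto H/G. Consequently H is an internal semidirect product of ker φ ≅ H/G and G. -/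
/-! The stabilizer `K` of `xt` meets `G` trivially because `G` acts freely, and `G * K = H`
because `h = φ h * ((φ h)⁻¹ * h)` with `(φ h)⁻¹ * h` fixing `xt`. So `K` is a complement
of `G`, which gives both the unique factorization and the bijection `K → H ⧸ G`; and `h`
fixes `xt` exactly when `φ h`, an element of the freely acting `G`, does, i.e. when
`φ h = 1`. -/

open scoped Pointwise

namespace MulAction

variable {H X : Type*} [Group H] [MulAction H X] {G : Subgroup H}

theorem smul_eq_self_iff_of_free (hfree : ∀ g ∈ G, ∀ x : X, g • x = x → g = 1) {g : H}
    (hg : g ∈ G) {x : X} : g • x = x ↔ g = 1 :=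
  ⟨hfree g hg x, fun h => h ▸ one_smul H x⟩

theorem disjoint_stabilizer_of_free (hfree : ∀ g ∈ G, ∀ x : X, g • x = x → g = 1)
    (x : X) : Disjoint G (stabilizer H x) :=
  Subgroup.disjoint_def.mpr fun hg hx => hfree _ hg x hx

theorem mul_stabilizer_eq_univ {x : X} (horbit : ∀ h : H, ∃ g ∈ G, h • x = g • x) :
    (G : Set H) * (stabilizer H x : Set H) = Set.univ := by
  refine Set.eq_univ_of_forall fun h => ?_
  obtain ⟨g, hg, hgx⟩ := horbit h
  have hfix : g⁻¹ * h ∈ stabilizer H x := by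
    rw [mem_stabilizer_iff, mul_smul, hgx, inv_smul_smul]
  exact ⟨g, hg, g⁻¹ * h, hfix, mul_inv_cancel_left g h⟩

theorem isComplement'_stabilizer_of_free (hfree : ∀ g ∈ G, ∀ x : X, g • x = x → g = 1)
    {x : X} (horbit : ∀ h : H, ∃ g ∈ G, h • x = g • x) :
    (stabilizer H x).IsComplement' G :=
  (Subgroup.isComplement'_of_disjoint_and_mul_eq_univ (disjoint_stabilizer_of_free hfree x)
    (mul_stabilizer_eq_univ horbit)).symm

end MulAction

open MulAction

/-- **The kernel of the lifting cocycle is a complement to `G`.**  Let `H` act on `X`,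
`G ⊴ H` act freely, `xt ∈ X`, and `φ : H → G` the unique map with
`h • xt = φ h • xt` for all `h ∈ H`.  Then `ker φ = {h : φ h = 1}` is a subgroup of
`H`, the restriction of the quotient homomorphism `H → H/G` to `ker φ` is a group
isomorphism onto `H/G` (i.e. it is bijective), and consequently `H` is an internal
semidirect product: every `h ∈ H` factors uniquely as `h = k * g` with `k ∈ ker φ`
and `g ∈ G`. -/
theorem stmt_15
    {H : Type*} [Group H] {X : Type*} [MulAction H X]
    (G : Subgroup H) [G.Normal]
    (hfree : ∀ g ∈ G, ∀ x : X, g • x = x → g = 1)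
    (xt : X) (φ : H → G)
    (hφ : ∀ h : H, h • xt = (φ h : H) • xt) :
    ∃ K : Subgroup H,
      (∀ h : H, h ∈ K ↔ φ h = 1) ∧
      Function.Bijective (fun kk : K => QuotientGroup.mk' G (kk : H)) ∧
      ∀ h : H, ∃! p : K × G, h = (p.1 : H) * (p.2 : H) := by
  have hK : (stabilizer H xt).IsComplement' G :=
    isComplement'_stabilizer_of_free hfree fun h => ⟨φ h, (φ h).2, hφ h⟩
  refine ⟨stabilizer H xt, fun h => ?_, Subgroup.isComplement_subgroup_right_iff_bijective.mp hK,
    fun h => ?_⟩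
  · rw [mem_stabilizer_iff, hφ, smul_eq_self_iff_of_free hfree (φ h).2, OneMemClass.coe_eq_one]
  · simpa only [eq_comm] using
      ((Subgroup.isComplement_iff_bijective _ _).mp hK).existsUnique h
end
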